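/- arXiv:1703.01483 — 2 statements merged into one kernel-verified Lean document; each statement's English description precedes it below -/
import Mathlib

section
/- Let G be a simple graph, let d, f, r, s be positive integers, let g be a nonnegative integer, and let e be 0 or 1. Suppose there exist G designs of orders f·d·r·s + e and g·d·s + e, and suppose there exists a decomposition of the complete bipartite graph K_{dr,ds} into G. Then for every integer t ≥ 0 there exists a G design of order t·f·d·r·s + g·d·s + e. -/
open SimpleGraph

/-- `K.DecomposesInto G`: a decomposition of `K` into `G`, i.e. a partition of the
edge set of `K` into the edge sets of subgraphs of `K`, each isomorphic to `G`. -/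
def SimpleGraph.DecomposesInto {V : Type*} {W : Type*} (K : SimpleGraph V)
    (G : SimpleGraph W) : Prop :=
  ∃ (ι : Type) (f : ι → K.Subgraph),
    (∀ i, Nonempty (G ≃g (f i).coe)) ∧
    ∀ e ∈ K.edgeSet, ∃! i, e ∈ (f i).edgeSet

/-- A `G` design of order `n`: a decomposition of the complete graph `K_n` on `n`
vertices into `G`. -/
def SimpleGraph.HasDesign {W : Type*} (G : SimpleGraph W) (n : ℕ) : Prop :=
  (⊤ : SimpleGraph (Fin n)).DecomposesInto G

/-- The complete multipartite graph with parts of sizes `m 0, …, m (k-1)`. -/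
def completeMultipartite {k : ℕ} (m : Fin k → ℕ) :
    SimpleGraph ((i : Fin k) × Fin (m i)) :=
  SimpleGraph.completeMultipartiteGraph fun i => Fin (m i)

/-- The set of edges joining consecutive entries of a list of vertices. -/
def consecEdges (l : List ℕ) : Set (Sym2 ℕ) :=
  {e | ∃ p ∈ l.zip l.tail, e = s(p.1, p.2)}

/-- The vertex list of a path of length `len` from vertex `0` to vertex `1` whose
internal vertices are `start, start + 1, …, start + len - 2`. -/
def thetaPath (len start : ℕ) : List ℕ :=
  0 :: ((List.range (len - 1)).map (· + start) ++ [1])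

/-- The theta graph `Θ(a,b,c)` on the vertex set `Fin (a+b+c-1)`: the two vertices
`0` and `1` of degree `3` are joined by three internally disjoint paths, of lengths
`a`, `b` and `c`, whose internal vertices are `2, …, a`, resp. `a+1, …, a+b-1`,
resp. `a+b, …, a+b+c-2`. -/
def thetaGraph (a b c : ℕ) : SimpleGraph (Fin (a + b + c - 1)) :=
  (SimpleGraph.fromEdgeSet
    (consecEdges (thetaPath a 2) ∪ consecEdges (thetaPath b (a + 1)) ∪
      consecEdges (thetaPath c (a + b)))).comap Fin.val

/-!
Induct on `t`. Put `a = f·d·r·s` and `b = t·f·d·r·s + g·d·s`, and split the vertices of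
`K_{a+b+e}` as `A ⊔ B ⊔ E` with `|A| = a`, `|B| = b`, `|E| = e`. Since `e ≤ 1`, the set `E`
spans no edge, so the edges of `K_{a+b+e}` are partitioned into those of `K_{A ∪ E}`, of
`K_{B ∪ E}` and of `K_{A,B}`. The first two carry `G` designs by hypothesis and by induction.
The last one is `K_{(fs)·dr, (tfr+g)·ds}`, which is edge-partitioned into copies of `K_{dr,ds}`,
one for each pair of blocks, and hence into copies of `G`.
-/

namespace SimpleGraph

open Function

variable {U V V' W : Type*} {K : SimpleGraph V} {G : SimpleGraph W}

@[simp]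
lemma Copy.edgeSet_toSubgraph (c : Copy G K) :
    c.toSubgraph.edgeSet = Sym2.map c '' G.edgeSet := by
  simp [Copy.toSubgraph]

lemma Copy.image_edgeSet_subset (c : Copy G K) : Sym2.map c '' G.edgeSet ⊆ K.edgeSet :=
  c.toHom.image_edgeSet_subset

theorem decomposesInto_iff_exists_copy :
    K.DecomposesInto G ↔ ∃ (ι : Type) (c : ι → Copy G K),
      ∀ e ∈ K.edgeSet, ∃! i, e ∈ Sym2.map (c i) '' G.edgeSet := by
  constructor
  · rintro ⟨ι, f, hiso, hpart⟩
    have hc (i : ι) : ∃ c : Copy G K, c.toSubgraph = f i :=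
      Copy.toSubgraph_surjOn (hiso i) |>.imp fun _ h => h.2
    choose c hc using hc
    exact ⟨ι, c, by simpa [← hc] using hpart⟩
  · rintro ⟨ι, c, hpart⟩
    exact ⟨ι, fun i => (c i).toSubgraph, fun i => ⟨(c i).isoToSubgraph⟩, by simpa using hpart⟩

theorem DecomposesInto.trans {H : SimpleGraph U} (hKH : K.DecomposesInto H)
    (hHG : H.DecomposesInto G) : K.DecomposesInto G := by
  obtain ⟨ι, c, hc⟩ := decomposesInto_iff_exists_copy.mp hKH
  obtain ⟨κ, d, hd⟩ := decomposesInto_iff_exists_copy.mp hHG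
  refine decomposesInto_iff_exists_copy.mpr
    ⟨ι × κ, fun p => (c p.1).comp (d p.2), fun e he => ?_⟩
  obtain ⟨i, ⟨e', he', rfl⟩, hi⟩ := hc e he
  obtain ⟨j, ⟨e'', he'', rfl⟩, hj⟩ := hd e' he'
  refine ⟨(i, j), ⟨e'', he'', by simp [Sym2.map_map]⟩, ?_⟩
  rintro ⟨i', j'⟩ ⟨f, hf, heq⟩
  simp only [Copy.coe_comp, ← Sym2.map_map] at heq
  obtain rfl : i' = i := hi i' ⟨_, (d j').toHom.map_mem_edgeSet hf, heq⟩
  obtain rfl : j' = j := hj j' ⟨f, hf, Sym2.map.injective (c i').injective heq⟩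
  rfl

theorem Copy.decomposesInto (c : Copy G K) (hc : K.edgeSet ⊆ Sym2.map c '' G.edgeSet) :
    K.DecomposesInto G :=
  decomposesInto_iff_exists_copy.mpr ⟨Unit, fun _ => c, fun _ he => ⟨(), hc he, fun _ _ => rfl⟩⟩

theorem Iso.decomposesInto (φ : G ≃g K) : K.DecomposesInto G :=
  φ.toCopy.decomposesInto fun e he =>
    ⟨Sym2.map φ.symm e, φ.symm.toHom.map_mem_edgeSet he, by simp [Sym2.map_map]⟩

theorem DecomposesInto.of_iso {K' : SimpleGraph V'} (h : K.DecomposesInto G) (φ : K ≃g K') :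
    K'.DecomposesInto G :=
  φ.decomposesInto.trans h

theorem DecomposesInto.map (f : V ↪ V') (h : K.DecomposesInto G) :
    (K.map f).DecomposesInto G :=
  ((Embedding.map f K).toCopy.decomposesInto (edgeSet_map f K).subset).trans h

theorem DecomposesInto.sup {K₁ K₂ : SimpleGraph V} (hdisj : Disjoint K₁ K₂)
    (h₁ : K₁.DecomposesInto G) (h₂ : K₂.DecomposesInto G) : (K₁ ⊔ K₂).DecomposesInto G := by
  obtain ⟨ι₁, c₁, hc₁⟩ := decomposesInto_iff_exists_copy.mp h₁
  obtain ⟨ι₂, c₂, hc₂⟩ := decomposesInto_iff_exists_copy.mp h₂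
  have hdisj' := disjoint_edgeSet.mpr hdisj
  refine decomposesInto_iff_exists_copy.mpr ⟨ι₁ ⊕ ι₂,
    Sum.elim (fun i => (Copy.ofLE _ _ le_sup_left).comp (c₁ i))
      (fun i => (Copy.ofLE _ _ le_sup_right).comp (c₂ i)), fun e he => ?_⟩
  rcases (edgeSet_sup K₁ K₂ ▸ he) with he | he
  · obtain ⟨i, hi, hi'⟩ := hc₁ e he
    refine ⟨.inl i, hi, ?_⟩
    rintro (j | j) hj
    · exact congrArg Sum.inl (hi' j hj)
    · exact (hdisj'.ne_of_mem he ((c₂ j).image_edgeSet_subset hj) rfl).elim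
  · obtain ⟨i, hi, hi'⟩ := hc₂ e he
    refine ⟨.inr i, hi, ?_⟩
    rintro (j | j) hj
    · exact (hdisj'.ne_of_mem ((c₁ j).image_edgeSet_subset hj) he rfl).elim
    · exact congrArg Sum.inr (hi' j hj)

theorem top_sum_sum_decomposesInto {X Y Z : Type*} [Subsingleton Z]
    (hX : (⊤ : SimpleGraph (X ⊕ Z)).DecomposesInto G)
    (hY : (⊤ : SimpleGraph (Y ⊕ Z)).DecomposesInto G)
    (hXY : (completeBipartiteGraph X Y).DecomposesInto G) :
    (⊤ : SimpleGraph (X ⊕ Y ⊕ Z)).DecomposesInto G := by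
  let KX := (⊤ : SimpleGraph (X ⊕ Z)).map (Embedding.sumMap (.refl X) (.inr (α := Y)))
  let KY := (⊤ : SimpleGraph (Y ⊕ Z)).map (Embedding.inr (α := X))
  let KXY := (completeBipartiteGraph X Y).map (Embedding.sumMap (.refl X) (.inl (β := Z)))
  have hsplit : ⊤ = KX ⊔ KY ⊔ KXY := by
    ext (x | y | z) (x' | y' | z') <;> simp [KX, KY, KXY, map_adj']
  have hXY_disj : Disjoint KX KY := by
    rw [disjoint_iff]
    ext (x | y | z) (x' | y' | z') <;> simp [KX, KY, map_adj']
    exact Subsingleton.elim _ _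
  have hbip_disj : Disjoint (KX ⊔ KY) KXY := by
    rw [disjoint_iff]
    ext (x | y | z) (x' | y' | z') <;> simp [KX, KY, KXY, map_adj']
  rw [hsplit]
  exact ((hX.map _).sup hXY_disj (hY.map _)).sup hbip_disj (hXY.map _)

theorem completeBipartiteGraph_prod_decomposesInto (I J : Type) (P Q : Type*) :
    (completeBipartiteGraph (I × P) (J × Q)).DecomposesInto (completeBipartiteGraph P Q) := by
  let c (ij : I × J) :
      Copy (completeBipartiteGraph P Q) (completeBipartiteGraph (I × P) (J × Q)) :=
    ⟨⟨Sum.map (Prod.mk ij.1) (Prod.mk ij.2), by rintro (p | q) (p' | q') <;> simp⟩,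
      Sum.map_injective.mpr ⟨Prod.mk_right_injective _, Prod.mk_right_injective _⟩⟩
  refine decomposesInto_iff_exists_copy.mpr ⟨I × J, c, fun e he => ?_⟩
  induction e using Sym2.ind with | _ u v => ?_
  wlog hu : u.isLeft generalizing u v
  · rw [Sym2.eq_swap]
    exact this v u (by rwa [Sym2.eq_swap]) (by cases u <;> cases v <;> simp_all)
  obtain ⟨⟨i, p⟩, rfl⟩ := Sum.isLeft_iff.mp hu
  obtain ⟨⟨j, q⟩, rfl⟩ : ∃ jq, v = .inr jq := by cases v <;> simp_all
  refine ⟨(i, j), ⟨s(.inl p, .inr q), by simp, rfl⟩, ?_⟩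
  rintro ⟨i', j'⟩ ⟨e', he', heq⟩
  induction e' using Sym2.ind with | _ a b => ?_
  cases a <;> cases b <;> simp_all [c]

theorem completeBipartiteGraph_fin_mul_decomposesInto (m n p q : ℕ) :
    (completeBipartiteGraph (Fin (m * p)) (Fin (n * q))).DecomposesInto
      (completeBipartiteGraph (Fin p) (Fin q)) :=
  (completeBipartiteGraph_prod_decomposesInto (Fin m) (Fin n) (Fin p) (Fin q)).of_iso
    (completeBipartiteGraphCongr finProdFinEquiv finProdFinEquiv)

theorem hasDesign_card_iff {α : Type*} [Fintype α] :
    G.HasDesign (Fintype.card α) ↔ (⊤ : SimpleGraph α).DecomposesInto G :=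
  ⟨fun h => DecomposesInto.of_iso h (Iso.completeGraph (Fintype.equivFin α).symm),
    fun h => h.of_iso (Iso.completeGraph (Fintype.equivFin α))⟩

theorem HasDesign.add {a b e : ℕ} (he : e ≤ 1) (ha : G.HasDesign (a + e))
    (hb : G.HasDesign (b + e))
    (hab : (completeBipartiteGraph (Fin a) (Fin b)).DecomposesInto G) :
    G.HasDesign (a + b + e) := by
  have : Subsingleton (Fin e) := Fin.subsingleton_iff_le_one.mpr he
  have h := top_sum_sum_decomposesInto (Z := Fin e) (hasDesign_card_iff.mp (by simpa using ha))
    (hasDesign_card_iff.mp (by simpa using hb)) hab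
  simpa [add_assoc] using hasDesign_card_iff.mpr h

end SimpleGraph

theorem bipartite_construction_general {V : Type*} (G : SimpleGraph V)
    (d f r s g e : ℕ)
    (he : e = 0 ∨ e = 1)
    (h1 : G.HasDesign (f * d * r * s + e))
    (h2 : G.HasDesign (g * d * s + e))
    (h3 : (completeBipartiteGraph (Fin (d * r))
      (Fin (d * s))).DecomposesInto G)
    (t : ℕ) :
    G.HasDesign (t * f * d * r * s + g * d * s + e) := by
  induction t with
  | zero => simpa using h2
  | succ t ih =>
    have hbip : (completeBipartiteGraph (Fin (f * d * r * s))
        (Fin (t * f * d * r * s + g * d * s))).DecomposesInto G := by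
      rw [show f * d * r * s = f * s * (d * r) by ring,
        show t * f * d * r * s + g * d * s = (t * f * r + g) * (d * s) by ring]
      exact (completeBipartiteGraph_fin_mul_decomposesInto _ _ _ _).trans h3
    convert HasDesign.add (by omega) h1 ih hbip using 2
    ring

theorem bipartite_construction {V : Type*} (G : SimpleGraph V)
    (d f r s g e : ℕ) (hd : 0 < d) (hf : 0 < f) (hr : 0 < r) (hs : 0 < s)
    (he : e = 0 ∨ e = 1)
    (h1 : G.HasDesign (f * d * r * s + e))
    (h2 : G.HasDesign (g * d * s + e))
    (h3 : (completeBipartiteGraph (Fin (d * r))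
      (Fin (d * s))).DecomposesInto G)
    (t : ℕ) :
    G.HasDesign (t * f * d * r * s + g * d * s + e) :=
  bipartite_construction_general G d f r s g e he h1 h2 h3 t
end

section
/- For every theta graph Θ(a,b,c) with a+b+c = 11 (so 1 ≤ a ≤ b ≤ c and b ≥ 2) there exist Θ(a,b,c) designs of orders 11 and 12; moreover, if a, b, c are not all odd, there also exists a Θ(a,b,c) design of order 22. -/
open SimpleGraph

/-!
Every design is exhibited explicitly. Its blocks are copies of `Θ(a,b,c)` obtained by developing
one to three base blocks under a cyclic group: `ℤ/5` rotating two 5-cycles and fixing a point for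
order 11, `ℤ/3` rotating four 3-cycles for order 12, and `ℤ/7` rotating three 7-cycles and fixing
a point for order 22. Copies that are pairwise edge-disjoint and together cover every pair of
points decompose `K_n`, and both conditions are checked by evaluation.
-/

namespace SimpleGraph

theorem DecomposesInto.of_copies {V W : Type*} {K : SimpleGraph V} {G : SimpleGraph W} {ι : Type}
    (f : ι → G.Copy K)
    (hdisj : Pairwise fun i j => Disjoint (f i).toSubgraph.edgeSet (f j).toSubgraph.edgeSet)
    (hcover : K.edgeSet ⊆ ⋃ i, (f i).toSubgraph.edgeSet) : K.DecomposesInto G := by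
  refine ⟨ι, fun i => (f i).toSubgraph, fun i => ⟨(f i).isoToSubgraph⟩, fun e he => ?_⟩
  obtain ⟨i, hi⟩ := Set.mem_iUnion.1 (hcover he)
  exact ⟨i, hi, fun j hj => by_contra fun hji => Set.disjoint_left.1 (hdisj hji) hj hi⟩

end SimpleGraph

def edgeListGraph (m : ℕ) (E : List (ℕ × ℕ)) : SimpleGraph (Fin m) :=
  (fromEdgeSet {e | ∃ p ∈ E, e = s(p.1, p.2)}).comap Fin.val

theorem edgeListGraph_adj {m : ℕ} {E : List (ℕ × ℕ)} {u v : Fin m} :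
    (edgeListGraph m E).Adj u v ↔ (∃ p ∈ E, s(↑u, ↑v) = s(p.1, p.2)) ∧ u ≠ v := by
  simp [edgeListGraph, Fin.val_ne_iff]

def thetaEdges (a b c : ℕ) : List (ℕ × ℕ) :=
  let pathEdges (l : List ℕ) := l.zip l.tail
  pathEdges (thetaPath a 2) ++ pathEdges (thetaPath b (a + 1)) ++ pathEdges (thetaPath c (a + b))

theorem thetaGraph_eq_edgeListGraph (a b c : ℕ) :
    thetaGraph a b c = edgeListGraph (a + b + c - 1) (thetaEdges a b c) := by
  simp only [thetaGraph, edgeListGraph, thetaEdges, consecEdges, List.mem_append, or_and_right,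
    exists_or]
  rfl

-- A block `l` is the map `v ↦ l[v]` from the vertices of the graph to the points.
def blockEdges (E : List (ℕ × ℕ)) (l : List ℕ) : List (Sym2 ℕ) :=
  E.map fun p => s(l.getD p.1 0, l.getD p.2 0)

section Blocks

variable {m n : ℕ} {E : List (ℕ × ℕ)} {l : List ℕ}

def blockEmbedding (hlen : l.length = m) (hnd : l.Nodup) (hlt : ∀ x ∈ l, x < n) :
    Fin m ↪ Fin n where
  toFun v := ⟨l[v.1]'(hlen ▸ v.2), hlt _ (List.getElem_mem _)⟩
  inj' u v huv := Fin.ext <| (hnd.getElem_inj_iff).1 (congrArg Fin.val huv)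

theorem blockEmbedding_apply (hlen : l.length = m) (hnd : l.Nodup) (hlt : ∀ x ∈ l, x < n)
    (v : Fin m) : (blockEmbedding hlen hnd hlt v : ℕ) = l.getD v 0 :=
  (List.getD_eq_getElem _ _ _).symm

def blockCopy (E : List (ℕ × ℕ)) (hlen : l.length = m) (hnd : l.Nodup) (hlt : ∀ x ∈ l, x < n) :
    (edgeListGraph m E).Copy (⊤ : SimpleGraph (Fin n)) :=
  (Embedding.completeGraph (blockEmbedding hlen hnd hlt)).toCopy.comp (Copy.ofLE _ ⊤ le_top)

theorem mem_edgeSet_blockCopy (hE : ∀ p ∈ E, p.1 < m ∧ p.2 < m) (hlen : l.length = m)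
    (hnd : l.Nodup) (hlt : ∀ x ∈ l, x < n) {x y : Fin n} (hxy : x ≠ y) :
    s(x, y) ∈ (blockCopy E hlen hnd hlt).toSubgraph.edgeSet ↔ s(↑x, ↑y) ∈ blockEdges E l := by
  have hval : ∀ u : Fin m, ((blockCopy E hlen hnd hlt).toHom u : ℕ) = l.getD u 0 :=
    blockEmbedding_apply hlen hnd hlt
  simp only [Subgraph.edgeSet_map, Subgraph.edgeSet_top, Set.mem_image, blockEdges, List.mem_map]
  constructor
  · rintro ⟨e, he, hexy⟩
    induction e using Sym2.ind with
    | _ u v =>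
      obtain ⟨⟨u', v'⟩, hp, huv⟩ := (edgeListGraph_adj.1 he).1
      refine ⟨_, hp, ?_⟩
      rw [Sym2.eq_iff] at huv
      simp only [Sym2.map_mk, Sym2.eq_iff, Fin.ext_iff, hval] at hexy ⊢
      rcases huv with ⟨rfl, rfl⟩ | ⟨rfl, rfl⟩ <;> tauto
  · rintro ⟨⟨u, v⟩, hp, hexy⟩
    obtain ⟨hu, hv⟩ := hE _ hp
    simp only [Sym2.eq_iff] at hexy
    refine ⟨s(⟨u, hu⟩, ⟨v, hv⟩), edgeListGraph_adj.2 ⟨⟨_, hp, rfl⟩, ?_⟩, ?_⟩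
    · intro huv
      obtain rfl : u = v := Fin.mk.inj huv
      exact hxy (Fin.ext (by omega))
    · simpa only [Sym2.map_mk, Sym2.eq_iff, Fin.ext_iff, hval] using hexy

abbrev IsBlockDecomposition (m n : ℕ) (E : List (ℕ × ℕ)) (B : List (List ℕ)) : Prop :=
  (∀ p ∈ E, p.1 < m ∧ p.2 < m) ∧ (∀ l ∈ B, l.length = m ∧ l.Nodup ∧ ∀ x ∈ l, x < n) ∧
    B.Pairwise (fun l l' => ∀ e ∈ blockEdges E l, e ∉ blockEdges E l') ∧
    ∀ x < n, ∀ y < x, s(x, y) ∈ B.flatMap (blockEdges E)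

theorem IsBlockDecomposition.decomposesInto {B : List (List ℕ)}
    (h : IsBlockDecomposition m n E B) :
    (⊤ : SimpleGraph (Fin n)).DecomposesInto (edgeListGraph m E) := by
  obtain ⟨hE, hB, hdisj, hcover⟩ := h
  have hBi (i : Fin B.length) := hB _ (List.getElem_mem i.2)
  let f (i : Fin B.length) := blockCopy E (hBi i).1 (hBi i).2.1 (hBi i).2.2
  have hf (i : Fin B.length) {x y : Fin n} (hxy : x ≠ y) :
      s(x, y) ∈ (f i).toSubgraph.edgeSet ↔ s(↑x, ↑y) ∈ blockEdges E B[i] :=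
    mem_edgeSet_blockCopy hE _ _ _ hxy
  refine DecomposesInto.of_copies f (fun i j hij => Set.disjoint_left.2 fun e hi hj => ?_)
    fun e he => ?_
  · induction e using Sym2.ind with
    | _ x y =>
      have hxy : x ≠ y :=
        (Subgraph.edgeSet_subset _ hi : s(x, y) ∈ (⊤ : SimpleGraph (Fin n)).edgeSet)
      have hdisj' := List.pairwise_iff_getElem.1 hdisj
      rcases lt_or_gt_of_ne (Fin.val_ne_iff.2 hij) with hlt | hlt
      · exact hdisj' i j i.2 j.2 hlt _ ((hf i hxy).1 hi) ((hf j hxy).1 hj)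
      · exact hdisj' j i j.2 i.2 hlt _ ((hf j hxy).1 hj) ((hf i hxy).1 hi)
  · induction e using Sym2.ind with
    | _ x y =>
      have hxy : x ≠ y := he
      have hmem : s(↑x, ↑y) ∈ B.flatMap (blockEdges E) := by
        rcases lt_or_gt_of_ne (Fin.val_ne_iff.2 hxy) with hlt | hlt
        · rw [Sym2.eq_swap]; exact hcover y y.2 x hlt
        · exact hcover x x.2 y hlt
      obtain ⟨l, hl, hmem⟩ := List.mem_flatMap.1 hmem
      obtain ⟨i, hi, rfl⟩ := List.mem_iff_getElem.1 hl
      exact Set.mem_iUnion.2 ⟨⟨i, hi⟩, (hf ⟨i, hi⟩ hxy).2 hmem⟩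

end Blocks

def cyclicShift (k N j x : ℕ) : ℕ :=
  if x < N then k * (x / k) + (x % k + j) % k else x

def develop (k N : ℕ) (base : List (List ℕ)) : List (List ℕ) :=
  (List.range k).flatMap fun j => base.map (List.map (cyclicShift k N j))

def thetaDesignBlocks : ℕ → ℕ → ℕ → ℕ → List (List ℕ)
  | 1, 2, 8, 11 => develop 5 10 [[8, 5, 2, 1, 4, 3, 7, 6, 10, 0]]
  | 1, 2, 8, 12 => develop 3 12
      [[11, 7, 8, 5, 1, 10, 0, 2, 6, 3],
       [3, 1, 4, 8, 10, 5, 9, 11, 0, 6]]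
  | 1, 2, 8, 22 => develop 7 21
      [[21, 10, 14, 4, 8, 7, 0, 13, 11, 19],
       [19, 17, 3, 7, 2, 6, 4, 5, 15, 18],
       [18, 6, 8, 0, 10, 16, 9, 12, 4, 19]]
  | 1, 3, 7, 11 => develop 5 10 [[8, 5, 7, 1, 3, 0, 4, 6, 10, 2]]
  | 1, 3, 7, 12 => develop 3 12
      [[1, 5, 0, 9, 7, 10, 2, 6, 8, 4],
       [11, 7, 6, 4, 1, 3, 9, 10, 5, 2]]
  | 1, 4, 6, 11 => develop 5 10 [[8, 5, 7, 1, 10, 4, 6, 3, 2, 0]]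
  | 1, 4, 6, 12 => develop 3 12
      [[1, 5, 0, 9, 7, 6, 2, 8, 4, 11],
       [11, 7, 0, 3, 6, 9, 2, 4, 5, 10]]
  | 1, 4, 6, 22 => develop 7 21
      [[21, 10, 14, 11, 0, 2, 1, 9, 12, 5],
       [19, 17, 13, 12, 16, 4, 2, 18, 10, 8],
       [18, 4, 6, 8, 15, 14, 9, 3, 0, 17]]
  | 1, 5, 5, 11 => develop 5 10 [[8, 5, 7, 1, 4, 0, 10, 2, 6, 3]]
  | 1, 5, 5, 12 => develop 3 12
      [[1, 5, 0, 9, 7, 10, 6, 8, 2, 4],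
       [10, 6, 9, 1, 11, 5, 3, 0, 7, 4]]
  | 2, 2, 7, 11 => develop 5 10 [[8, 6, 5, 1, 4, 0, 2, 10, 9, 3]]
  | 2, 2, 7, 12 => develop 3 12
      [[7, 4, 8, 0, 9, 5, 11, 1, 10, 6],
       [10, 1, 9, 7, 5, 4, 2, 0, 3, 6]]
  | 2, 2, 7, 22 => develop 7 21
      [[21, 14, 10, 20, 0, 7, 1, 9, 11, 6],
       [19, 3, 17, 7, 2, 18, 5, 16, 9, 6],
       [7, 19, 15, 10, 17, 11, 12, 3, 2, 0]]
  | 2, 3, 6, 11 => develop 5 10 [[8, 6, 5, 1, 10, 4, 7, 2, 3, 0]]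
  | 2, 3, 6, 12 => develop 3 12
      [[7, 4, 8, 0, 9, 5, 1, 6, 10, 11],
       [10, 0, 2, 4, 5, 7, 1, 11, 6, 3]]
  | 2, 3, 6, 22 => develop 7 21
      [[21, 14, 10, 20, 7, 6, 0, 9, 11, 3],
       [19, 3, 17, 11, 8, 18, 2, 4, 7, 16],
       [7, 15, 19, 13, 0, 3, 10, 20, 1, 5]]
  | 2, 4, 5, 11 => develop 5 10 [[8, 6, 5, 1, 4, 0, 10, 2, 7, 3]]
  | 2, 4, 5, 12 => develop 3 12
      [[7, 4, 8, 0, 9, 5, 1, 6, 10, 2],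
       [10, 2, 9, 7, 4, 0, 8, 3, 11, 5]]
  | 2, 4, 5, 22 => develop 7 21
      [[21, 14, 10, 20, 7, 6, 0, 9, 11, 4],
       [19, 3, 17, 11, 18, 5, 10, 20, 14, 9],
       [7, 14, 3, 2, 1, 5, 10, 9, 6, 18]]
  | 3, 3, 5, 11 => develop 5 10 [[8, 6, 5, 2, 1, 7, 3, 0, 4, 10]]
  | 3, 3, 5, 12 => develop 3 12
      [[1, 9, 5, 0, 7, 10, 2, 6, 8, 4],
       [4, 8, 6, 10, 11, 0, 3, 9, 2, 5]]
  | 3, 4, 4, 11 => develop 5 10 [[8, 7, 5, 2, 1, 3, 10, 4, 0, 6]]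
  | 3, 4, 4, 12 => develop 3 12
      [[1, 9, 5, 0, 7, 10, 2, 6, 8, 4],
       [4, 8, 11, 10, 5, 2, 1, 6, 3, 9]]
  | 3, 4, 4, 22 => develop 7 21
      [[21, 11, 10, 14, 0, 7, 1, 19, 18, 6],
       [19, 11, 17, 3, 2, 18, 12, 16, 5, 0],
       [3, 11, 18, 13, 2, 6, 19, 12, 14, 7]]
  | _, _, _, _ => []

theorem hasDesign_of_thetaDesignBlocks {a b c n : ℕ}
    (h : IsBlockDecomposition (a + b + c - 1) n (thetaEdges a b c) (thetaDesignBlocks a b c n)) :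
    (thetaGraph a b c).HasDesign n := by
  rw [SimpleGraph.HasDesign, thetaGraph_eq_edgeListGraph]
  exact h.decomposesInto

def theta11Shapes : List (ℕ × ℕ × ℕ) :=
  [(1, 2, 8), (1, 3, 7), (1, 4, 6), (1, 5, 5), (2, 2, 7), (2, 3, 6), (2, 4, 5), (3, 3, 5), (3, 4, 4)]

theorem mem_theta11Shapes {a b c : ℕ} (ha : 1 ≤ a) (hab : a ≤ b) (hbc : b ≤ c) (hb : 2 ≤ b)
    (habc : a + b + c = 11) : (a, b, c) ∈ theta11Shapes := by
  obtain rfl : c = 11 - a - b := by omega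
  have : a ≤ 3 := by omega
  have : b ≤ 5 := by omega
  interval_cases a <;> interval_cases b <;> first | decide | omega

set_option maxHeartbeats 1000000 in
theorem theta11_designs (a b c : ℕ) (ha : 1 ≤ a) (hab : a ≤ b) (hbc : b ≤ c)
    (hb : 2 ≤ b) (habc : a + b + c = 11) :
    ((thetaGraph a b c).HasDesign 11 ∧ (thetaGraph a b c).HasDesign 12) ∧
    (¬(Odd a ∧ Odd b ∧ Odd c) →
      (thetaGraph a b c).HasDesign 22) := by
  have hshape := mem_theta11Shapes ha hab hbc hb habc
  simp only [theta11Shapes, List.mem_cons, Prod.mk.injEq, List.not_mem_nil, or_false] at hshape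
  rcases hshape with ⟨rfl, rfl, rfl⟩ | ⟨rfl, rfl, rfl⟩ | ⟨rfl, rfl, rfl⟩ | ⟨rfl, rfl, rfl⟩ |
    ⟨rfl, rfl, rfl⟩ | ⟨rfl, rfl, rfl⟩ | ⟨rfl, rfl, rfl⟩ | ⟨rfl, rfl, rfl⟩ | ⟨rfl, rfl, rfl⟩
  all_goals
    refine ⟨⟨?_, ?_⟩, fun hodd => ?_⟩
    all_goals first
      | exact (hodd (by decide)).elim
      | exact hasDesign_of_thetaDesignBlocks (by decide +kernel)
end
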